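/- Suppose Φ ≺ 0. Then there exists M > 0, depending only on N, a, δ, τ, K, P₁, P₂, P₃, S, R, such that every continuously differentiable function x : [0,∞) → ℝ^{N+1} satisfying the delay differential equation ẋ(t) = A x(t) + B K x(t−τ) for all t ≥ τ obeys |x(t)| ≤ M e^{−δt} · sup_{s∈[0,τ]}(|x(s)| + |ẋ(s)|) for all t ≥ 0. -/

import Mathlib

open Matrix

/-- The diagonal matrix `A = diag(a - λ₀, …, a - λ_N)` with `λₙ = (nπ)²`. -/
noncomputable def Amat (N : ℕ) (a : ℝ) : Matrix (Fin (N + 1)) (Fin (N + 1)) ℝ :=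
  Matrix.diagonal fun n : Fin (N + 1) => a - ((n : ℕ) * Real.pi) ^ 2

/-- The column vector `B` with `B₀ = 1` and `Bₙ = (-1)ⁿ√2` for `1 ≤ n ≤ N`. -/
noncomputable def Bmat (N : ℕ) : Matrix (Fin (N + 1)) (Fin 1) ℝ :=
  Matrix.of fun i _ => if (i : ℕ) = 0 then (1 : ℝ) else (-1 : ℝ) ^ (i : ℕ) * Real.sqrt 2

/-- The symmetric 3(N+1)×3(N+1) block matrix `Φ` from the LMI of Theorem 2 (le2). -/
noncomputable def Phi (N : ℕ) (a δ τ : ℝ) (K : Matrix (Fin 1) (Fin (N + 1)) ℝ)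
    (P₁ P₂ P₃ S R : Matrix (Fin (N + 1)) (Fin (N + 1)) ℝ) :
    Matrix (Fin (N + 1) ⊕ (Fin (N + 1) ⊕ Fin (N + 1)))
      (Fin (N + 1) ⊕ (Fin (N + 1) ⊕ Fin (N + 1))) ℝ :=
  let A := Amat N a
  let BK := Bmat N * K
  let Φ11 := Aᵀ * P₂ + P₂ᵀ * A + (2 * δ) • P₁ + S - Real.exp (-2 * δ * τ) • R
  let Φ12 := P₁ - P₂ᵀ + Aᵀ * P₃
  let Φ13 := Real.exp (-2 * δ * τ) • R + P₂ᵀ * BK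
  let Φ22 := -P₃ - P₃ᵀ + τ ^ 2 • R
  let Φ23 := P₃ᵀ * BK
  let Φ33 := -(Real.exp (-2 * δ * τ)) • (S + R)
  Matrix.fromBlocks Φ11 (Matrix.fromCols Φ12 Φ13) (Matrix.fromRows Φ12ᵀ Φ13ᵀ)
    (Matrix.fromBlocks Φ22 Φ23 Φ23ᵀ Φ33)

/-!
Lyapunov–Krasovskii argument with the descriptor method. Along a solution consider

    W(t) = e^{2δt} (xᵀP₁x + ∫_{t-τ}^t e^{2δ(s-t)} xᵀSx ds
                    + τ ∫_{-τ}^0 ∫_{t+θ}^t e^{2δ(s-t)} ẋᵀRẋ ds dθ).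

Adding the vanishing term `2 (P₂x + P₃ẋ)ᵀ (Ax + BKx(t-τ) - ẋ)` to `Ẇ` and bounding the last
integral from below by Jensen's inequality gives `e^{-2δt} Ẇ(t) ≤ ηᵀΦη ≤ 0` for
`η = (x(t), ẋ(t), x(t-τ))`. So `W` is nonincreasing on `[τ, ∞)`, and comparing
`W(t) ≥ e^{2δt} x(t)ᵀP₁x(t)` with `W(τ) ≲ e^{2δτ} sup_{[0,τ]} (|x| + |ẋ|)²` gives the decay.
-/

open Real

theorem exists_norm_eq_one_mul_sq_norm_le {E : Type*} [NormedAddCommGroup E] [NormedSpace ℝ E]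
    [FiniteDimensional ℝ E] [Nontrivial E] {f : E → ℝ} (hf : Continuous f)
    (hhom : ∀ (c : ℝ) (v : E), f (c • v) = c ^ 2 * f v) :
    ∃ v₀ : E, ‖v₀‖ = 1 ∧ ∀ v, f v₀ * ‖v‖ ^ 2 ≤ f v := by
  obtain ⟨v₀, hv₀, hmin⟩ := (isCompact_sphere (0 : E) 1).exists_isMinOn
    (NormedSpace.sphere_nonempty.mpr zero_le_one) hf.continuousOn
  refine ⟨v₀, by simpa using hv₀, fun v => ?_⟩
  rcases eq_or_ne v 0 with rfl | hv
  · simp [show f 0 = 0 by simpa using hhom 0 0]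
  have hv' : ‖v‖ ≠ 0 := norm_ne_zero_iff.mpr hv
  have hle : f v₀ ≤ (‖v‖⁻¹) ^ 2 * f v := by
    rw [← hhom]
    exact hmin (by simp [norm_smul, hv'])
  calc f v₀ * ‖v‖ ^ 2 ≤ (‖v‖⁻¹) ^ 2 * f v * ‖v‖ ^ 2 := by gcongr
    _ = f v := by field_simp

theorem intervalIntegral_dotProduct {ι : Type*} [Fintype ι] {g : ℝ → ι → ℝ} {a b : ℝ}
    (hg : IntervalIntegrable g MeasureTheory.volume a b) (w : ι → ℝ) :
    ∫ s in a..b, g s ⬝ᵥ w = (∫ s in a..b, g s) ⬝ᵥ w :=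
  (LinearMap.toContinuousLinearMap ((dotProductBilin ℝ ℝ).flip w)).intervalIntegral_comp_comm hg

namespace Matrix

theorem PosSemidef.transpose_eq {ι : Type*} {P : Matrix ι ι ℝ} (hP : P.PosSemidef) : Pᵀ = P :=
  (isHermitian_iff_isSymm.mp hP.isHermitian).eq

variable {ι : Type*} [Fintype ι]

theorem continuous_quadForm (P : Matrix ι ι ℝ) : Continuous fun v : ι → ℝ => v ⬝ᵥ P *ᵥ v :=
  continuous_id.dotProduct (continuous_const.matrix_mulVec continuous_id)

theorem quadForm_smul (P : Matrix ι ι ℝ) (c : ℝ) (v : ι → ℝ) :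
    (c • v) ⬝ᵥ P *ᵥ (c • v) = c ^ 2 * (v ⬝ᵥ P *ᵥ v) := by
  simp only [mulVec_smul, dotProduct_smul, smul_dotProduct, smul_eq_mul]
  ring

theorem quadForm_sub (P : Matrix ι ι ℝ) (u c : ι → ℝ) :
    (u - c) ⬝ᵥ P *ᵥ (u - c) = u ⬝ᵥ P *ᵥ u - u ⬝ᵥ (P *ᵥ c + c ᵥ* P) + c ⬝ᵥ P *ᵥ c := by
  rw [dotProduct_add, dotProduct_comm u (c ᵥ* P), ← dotProduct_mulVec]
  simp only [mulVec_sub, dotProduct_sub, sub_dotProduct]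
  ring

theorem PosSemidef.quadForm_nonneg {P : Matrix ι ι ℝ} (hP : P.PosSemidef) (v : ι → ℝ) :
    0 ≤ v ⬝ᵥ P *ᵥ v := by
  simpa using hP.dotProduct_mulVec_nonneg v

theorem PosDef.exists_pos_mul_sq_norm_le [Nonempty ι] {P : Matrix ι ι ℝ} (hP : P.PosDef) :
    ∃ c > 0, ∀ v : ι → ℝ, c * ‖v‖ ^ 2 ≤ v ⬝ᵥ P *ᵥ v := by
  obtain ⟨v₀, hv₀, hle⟩ :=
    exists_norm_eq_one_mul_sq_norm_le (continuous_quadForm P) (quadForm_smul P)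
  refine ⟨_, ?_, hle⟩
  simpa using hP.dotProduct_mulVec_pos (x := v₀) (by rintro rfl; simp at hv₀)

theorem PosSemidef.exists_quadForm_le_mul_sq_norm [Nonempty ι] {P : Matrix ι ι ℝ}
    (hP : P.PosSemidef) : ∃ C ≥ 0, ∀ v : ι → ℝ, v ⬝ᵥ P *ᵥ v ≤ C * ‖v‖ ^ 2 := by
  obtain ⟨v₀, -, hle⟩ := exists_norm_eq_one_mul_sq_norm_le
    (f := fun v => -(v ⬝ᵥ P *ᵥ v)) (continuous_quadForm P).neg
    fun c v => by simp only [quadForm_smul]; ring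
  exact ⟨_, hP.quadForm_nonneg v₀, fun v => by linarith [hle v]⟩

theorem quadForm_intervalIntegral_le {P : Matrix ι ι ℝ} (hP : ∀ v, 0 ≤ v ⬝ᵥ P *ᵥ v)
    {g : ℝ → ι → ℝ} (hg : Continuous g) {a b : ℝ} (hab : a ≤ b) :
    (∫ s in a..b, g s) ⬝ᵥ P *ᵥ (∫ s in a..b, g s) ≤ (b - a) * ∫ s in a..b, g s ⬝ᵥ P *ᵥ g s := by
  rcases hab.eq_or_lt with rfl | hlt
  · simp
  set L := b - a
  have hL : 0 < L := sub_pos.mpr hlt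
  set v := ∫ s in a..b, g s
  set c := L⁻¹ • v
  -- expand `0 ≤ ∫ q(g - c)` around the mean value `c` of `g`
  have hint : ∫ s in a..b, (g s - c) ⬝ᵥ P *ᵥ (g s - c)
      = (∫ s in a..b, g s ⬝ᵥ P *ᵥ g s) - v ⬝ᵥ (P *ᵥ c + c ᵥ* P) + L * (c ⬝ᵥ P *ᵥ c) := by
    simp only [quadForm_sub]
    have hq : Continuous fun s => g s ⬝ᵥ P *ᵥ g s := (continuous_quadForm P).comp hg
    have hl : Continuous fun s => g s ⬝ᵥ (P *ᵥ c + c ᵥ* P) := hg.dotProduct continuous_const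
    rw [intervalIntegral.integral_add ((hq.fun_sub hl).intervalIntegrable a b)
        intervalIntegrable_const,
      intervalIntegral.integral_sub (hq.intervalIntegrable a b) (hl.intervalIntegrable a b),
      intervalIntegral_dotProduct (hg.intervalIntegrable a b), intervalIntegral.integral_const,
      smul_eq_mul]
  have hcross : v ⬝ᵥ (P *ᵥ c + c ᵥ* P) = 2 * L⁻¹ * (v ⬝ᵥ P *ᵥ v) := by
    rw [dotProduct_add, dotProduct_comm v (c ᵥ* P), ← dotProduct_mulVec]
    simp only [c, mulVec_smul, dotProduct_smul, smul_dotProduct, smul_eq_mul]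
    ring
  have hnonneg : 0 ≤ ∫ s in a..b, (g s - c) ⬝ᵥ P *ᵥ (g s - c) :=
    intervalIntegral.integral_nonneg hab fun s _ => hP _
  rw [hint, hcross, quadForm_smul] at hnonneg
  field_simp at hnonneg
  linarith

end Matrix

theorem HasDerivAt.dotProduct {ι : Type*} [Fintype ι] {f g : ℝ → ι → ℝ} {f' g' : ι → ℝ} {t : ℝ}
    (hf : HasDerivAt f f' t) (hg : HasDerivAt g g' t) :
    HasDerivAt (fun s => f s ⬝ᵥ g s) (f' ⬝ᵥ g t + f t ⬝ᵥ g') t := by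
  simp only [_root_.dotProduct, ← Finset.sum_add_distrib]
  exact HasDerivAt.fun_sum fun i _ => (hasDerivAt_pi.1 hf i).mul (hasDerivAt_pi.1 hg i)

theorem HasDerivAt.matrix_mulVec {m ι : Type*} [Fintype m] [Fintype ι] (P : Matrix m ι ℝ)
    {f : ℝ → ι → ℝ} {f' : ι → ℝ} {t : ℝ} (hf : HasDerivAt f f' t) :
    HasDerivAt (fun s => P *ᵥ f s) (P *ᵥ f') t :=
  (LinearMap.toContinuousLinearMap P.mulVecLin).hasFDerivAt.comp_hasDerivAt t hf

theorem Continuous.hasDerivAt_integral_window {E : Type*} [NormedAddCommGroup E]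
    [NormedSpace ℝ E] [CompleteSpace E] {f : ℝ → E} (hf : Continuous f) (τ t : ℝ) :
    HasDerivAt (fun u => ∫ s in u - τ..u, f s) (f t - f (t - τ)) t := by
  have hF (u : ℝ) : HasDerivAt (fun u => ∫ s in (0 : ℝ)..u, f s) (f u) u :=
    (hf.integral_hasStrictDerivAt 0 u).hasDerivAt
  have hwindow : (fun u => ∫ s in u - τ..u, f s)
      = fun u => (∫ s in (0 : ℝ)..u, f s) - ∫ s in (0 : ℝ)..u - τ, f s := by
    ext u
    rw [intervalIntegral.integral_interval_sub_left (hf.intervalIntegrable _ _)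
      (hf.intervalIntegrable _ _)]
  rw [hwindow]
  exact (hF t).sub ((hF (t - τ)).comp_sub_const t τ)

theorem Continuous.hasDerivAt_integral_window_weighted {f : ℝ → ℝ} (hf : Continuous f) (τ t : ℝ) :
    HasDerivAt (fun u => ∫ s in u - τ..u, (τ - u + s) * f s)
      (τ * f t - ∫ s in t - τ..t, f s) t := by
  have hsplit : (fun u => ∫ s in u - τ..u, (τ - u + s) * f s)
      = fun u => (τ - u) * (∫ s in u - τ..u, f s) + ∫ s in u - τ..u, s * f s := by
    ext u
    simp only [add_mul]
    rw [intervalIntegral.integral_add (Continuous.intervalIntegrable (by fun_prop) _ _)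
      (Continuous.intervalIntegrable (by fun_prop) _ _), intervalIntegral.integral_const_mul]
  rw [hsplit]
  exact ((((hasDerivAt_id' t).const_sub τ).fun_mul (hf.hasDerivAt_integral_window τ t)).fun_add
    ((continuous_id'.fun_mul hf).hasDerivAt_integral_window τ t)).congr_deriv (by ring)

theorem intervalIntegral_le_mul_of_nonneg_of_le {f : ℝ → ℝ} {a b C : ℝ} (hab : a ≤ b)
    (hf : ∀ s ∈ Set.Icc a b, 0 ≤ f s ∧ f s ≤ C) : ∫ s in a..b, f s ≤ C * (b - a) := by
  have hnorm := intervalIntegral.norm_integral_le_of_norm_le_const (a := a) (b := b) (f := f)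
    (C := C) fun s hs => by
      rw [Set.uIoc_of_le hab] at hs
      obtain ⟨h0, hC⟩ := hf s (Set.Ioc_subset_Icc_self hs)
      rwa [Real.norm_eq_abs, abs_of_nonneg h0]
  rw [Real.norm_eq_abs, abs_of_nonneg (sub_nonneg.mpr hab)] at hnorm
  exact (le_abs_self _).trans hnorm

theorem exists_extension_of_hasDerivAt_Ici {E : Type*} [NormedAddCommGroup E] [NormedSpace ℝ E]
    {x x' : ℝ → E} (hdx : ∀ t, 0 ≤ t → HasDerivAt x (x' t) t) (hcx : ContinuousOn x' (Set.Ici 0)) :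
    ∃ xe ye : ℝ → E, Continuous xe ∧ Continuous ye ∧ (∀ t, 0 ≤ t → xe t = x t ∧ ye t = x' t) ∧
      ∀ t, 0 < t → HasDerivAt xe (ye t) t := by
  have hxc : ContinuousOn x (Set.Ici 0) := fun t ht => (hdx t ht).continuousAt.continuousWithinAt
  have hmax : Continuous fun t : ℝ => max t 0 := continuous_id.max continuous_const
  refine ⟨fun t => x (max t 0), fun t => x' (max t 0),
    hxc.comp_continuous hmax fun t => le_max_right t 0,
    hcx.comp_continuous hmax fun t => le_max_right t 0,
    fun t ht => by simp [max_eq_left ht], fun t ht => ?_⟩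
  refine ((hdx t ht.le).congr_of_eventuallyEq ?_).congr_deriv (by simp [max_eq_left ht.le])
  filter_upwards [Ioi_mem_nhds ht] with s hs
  simp [max_eq_left (Set.mem_Ioi.mp hs).le]

theorem norm_le_sSup_image_Icc {E : Type*} [NormedAddCommGroup E] {x x' : ℝ → E} {a b : ℝ}
    (hx : ContinuousOn x (Set.Icc a b)) (hx' : ContinuousOn x' (Set.Icc a b)) {s : ℝ}
    (hs : s ∈ Set.Icc a b) :
    ‖x s‖ ≤ sSup ((fun s => ‖x s‖ + ‖x' s‖) '' Set.Icc a b) ∧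
      ‖x' s‖ ≤ sSup ((fun s => ‖x s‖ + ‖x' s‖) '' Set.Icc a b) := by
  have : ‖x s‖ + ‖x' s‖ ≤ sSup ((fun s => ‖x s‖ + ‖x' s‖) '' Set.Icc a b) :=
    le_csSup (isCompact_Icc.bddAbove_image (hx.norm.add hx'.norm)) (Set.mem_image_of_mem _ hs)
  constructor <;> linarith [norm_nonneg (x s), norm_nonneg (x' s)]

theorem le_sqrt_mul_exp_mul_of_sq_le {r C D δ τ t : ℝ} (hC : 0 ≤ C) (hD : 0 ≤ D)
    (h : r ^ 2 ≤ C * exp (2 * δ * (τ - t)) * D ^ 2) : r ≤ √C * exp (δ * τ) * exp (-δ * t) * D := by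
  have hexp : exp (2 * δ * (τ - t)) = exp (δ * τ) ^ 2 * exp (-δ * t) ^ 2 := by
    rw [← exp_nat_mul, ← exp_nat_mul, ← exp_add]; push_cast; ring_nf
  refine abs_le_of_sq_le_sq' (h.trans_eq ?_) (by positivity) |>.2
  rw [hexp, mul_pow, mul_pow, mul_pow, Real.sq_sqrt hC]
  ring

section LyapunovKrasovskii

variable {ι : Type*} [Fintype ι] (δ τ : ℝ) (P S R : Matrix ι ι ℝ) (x y : ℝ → ι → ℝ)

/-- The functional `W` of the header. Its double integral `∫_{-τ}^0 ∫_{t+θ}^t` is written as a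
single integral with weight `τ - t + s`, the measure of `{θ ∈ [-τ, 0] | t + θ ≤ s}`. -/
noncomputable def lyapunovKrasovskii (t : ℝ) : ℝ :=
  exp (2 * δ * t) * (x t ⬝ᵥ P *ᵥ x t) + (∫ s in t - τ..t, exp (2 * δ * s) * (x s ⬝ᵥ S *ᵥ x s))
    + τ * ∫ s in t - τ..t, (τ - t + s) * (exp (2 * δ * s) * (y s ⬝ᵥ R *ᵥ y s))

noncomputable def lyapunovKrasovskiiDeriv (t : ℝ) : ℝ :=
  exp (2 * δ * t) * (2 * δ * (x t ⬝ᵥ P *ᵥ x t) + (y t ⬝ᵥ P *ᵥ x t + x t ⬝ᵥ P *ᵥ y t)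
      + x t ⬝ᵥ S *ᵥ x t + τ ^ 2 * (y t ⬝ᵥ R *ᵥ y t))
    - exp (2 * δ * (t - τ)) * (x (t - τ) ⬝ᵥ S *ᵥ x (t - τ))
    - τ * ∫ s in t - τ..t, exp (2 * δ * s) * (y s ⬝ᵥ R *ᵥ y s)

variable {δ τ P S R x y}

theorem hasDerivAt_lyapunovKrasovskii (hx : Continuous x) (hy : Continuous y) {t : ℝ}
    (hxt : HasDerivAt x (y t) t) :
    HasDerivAt (lyapunovKrasovskii δ τ P S R x y) (lyapunovKrasovskiiDeriv δ τ P S R x y t) t := by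
  have hexp : HasDerivAt (fun s => exp (2 * δ * s)) (2 * δ * exp (2 * δ * t)) t :=
    ((hasDerivAt_id' t).const_mul (2 * δ)).exp.congr_deriv (by ring)
  have hS : Continuous fun s => exp (2 * δ * s) * (x s ⬝ᵥ S *ᵥ x s) := by
    have := (continuous_quadForm S).comp hx
    fun_prop
  have hR : Continuous fun s => exp (2 * δ * s) * (y s ⬝ᵥ R *ᵥ y s) := by
    have := (continuous_quadForm R).comp hy
    fun_prop
  exact (((hexp.fun_mul (hxt.dotProduct (hxt.matrix_mulVec P))).fun_add
    (hS.hasDerivAt_integral_window τ t)).fun_add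
    ((hR.hasDerivAt_integral_window_weighted τ t).const_mul τ)).congr_deriv (by
      simp only [lyapunovKrasovskiiDeriv, mul_sub, mul_add]; ring)

theorem exp_mul_quadForm_le_lyapunovKrasovskii (hτ : 0 ≤ τ) (hS : ∀ v, 0 ≤ v ⬝ᵥ S *ᵥ v)
    (hR : ∀ v, 0 ≤ v ⬝ᵥ R *ᵥ v) (t : ℝ) :
    exp (2 * δ * t) * (x t ⬝ᵥ P *ᵥ x t) ≤ lyapunovKrasovskii δ τ P S R x y t := by
  have hwindow : t - τ ≤ t := by linarith
  have hSint : 0 ≤ ∫ s in t - τ..t, exp (2 * δ * s) * (x s ⬝ᵥ S *ᵥ x s) :=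
    intervalIntegral.integral_nonneg hwindow fun s _ => mul_nonneg (exp_pos _).le (hS _)
  have hRint : 0 ≤ ∫ s in t - τ..t, (τ - t + s) * (exp (2 * δ * s) * (y s ⬝ᵥ R *ᵥ y s)) :=
    intervalIntegral.integral_nonneg hwindow fun s hs =>
      mul_nonneg (by linarith [hs.1]) (mul_nonneg (exp_pos _).le (hR _))
  unfold lyapunovKrasovskii
  nlinarith

theorem lyapunovKrasovskii_self_le (hδ : 0 ≤ δ) (hτ : 0 ≤ τ) (hS : ∀ v, 0 ≤ v ⬝ᵥ S *ᵥ v)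
    (hR : ∀ v, 0 ≤ v ⬝ᵥ R *ᵥ v) {α β γ : ℝ} (hα : x τ ⬝ᵥ P *ᵥ x τ ≤ α)
    (hβ : ∀ s ∈ Set.Icc 0 τ, x s ⬝ᵥ S *ᵥ x s ≤ β) (hγ : ∀ s ∈ Set.Icc 0 τ, y s ⬝ᵥ R *ᵥ y s ≤ γ) :
    lyapunovKrasovskii δ τ P S R x y τ ≤ exp (2 * δ * τ) * (α + τ * β + τ ^ 3 * γ) := by
  have hexp {s : ℝ} (hs : s ∈ Set.Icc 0 τ) : exp (2 * δ * s) ≤ exp (2 * δ * τ) := by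
    gcongr; exact hs.2
  have hSint : ∫ s in (0 : ℝ)..τ, exp (2 * δ * s) * (x s ⬝ᵥ S *ᵥ x s)
      ≤ exp (2 * δ * τ) * β * (τ - 0) :=
    intervalIntegral_le_mul_of_nonneg_of_le hτ fun s hs =>
      ⟨mul_nonneg (exp_pos _).le (hS _), mul_le_mul (hexp hs) (hβ s hs) (hS _) (exp_pos _).le⟩
  have hRint : ∫ s in (0 : ℝ)..τ, s * (exp (2 * δ * s) * (y s ⬝ᵥ R *ᵥ y s))
      ≤ τ * (exp (2 * δ * τ) * γ) * (τ - 0) :=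
    intervalIntegral_le_mul_of_nonneg_of_le hτ fun s hs =>
      have hRs := mul_nonneg (exp_pos (2 * δ * s)).le (hR (y s))
      ⟨mul_nonneg hs.1 hRs, mul_le_mul hs.2 (mul_le_mul (hexp hs) (hγ s hs) (hR _) (exp_pos _).le)
        hRs hτ⟩
  have hPτ := mul_le_mul_of_nonneg_left hα (exp_pos (2 * δ * τ)).le
  simp only [lyapunovKrasovskii, sub_self, zero_add]
  nlinarith

end LyapunovKrasovskii

theorem quadForm_Phi {N : ℕ} (a δ τ : ℝ) (K : Matrix (Fin 1) (Fin (N + 1)) ℝ)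
    {P₁ P₂ P₃ S R : Matrix (Fin (N + 1)) (Fin (N + 1)) ℝ} (hP₁ : P₁ᵀ = P₁) (hR : Rᵀ = R)
    (u v w : Fin (N + 1) → ℝ) :
    Sum.elim u (Sum.elim v w) ⬝ᵥ Phi N a δ τ K P₁ P₂ P₃ S R *ᵥ Sum.elim u (Sum.elim v w)
      = 2 * δ * (u ⬝ᵥ P₁ *ᵥ u) + 2 * (u ⬝ᵥ P₁ *ᵥ v) + u ⬝ᵥ S *ᵥ u
        - exp (-2 * δ * τ) * (w ⬝ᵥ S *ᵥ w) + τ ^ 2 * (v ⬝ᵥ R *ᵥ v)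
        - exp (-2 * δ * τ) * ((u - w) ⬝ᵥ R *ᵥ (u - w))
        + 2 * ((P₂ *ᵥ u + P₃ *ᵥ v) ⬝ᵥ (Amat N a *ᵥ u + (Bmat N * K) *ᵥ w - v)) := by
  have hT {m n : Type} [Fintype m] [Fintype n] (M : Matrix m n ℝ) (p : n → ℝ) (q : m → ℝ) :
      p ⬝ᵥ Mᵀ *ᵥ q = (M *ᵥ p) ⬝ᵥ q := by
    rw [mulVec_transpose, dotProduct_comm, ← dotProduct_mulVec, dotProduct_comm]
  have hP₁uv : v ⬝ᵥ P₁ *ᵥ u = u ⬝ᵥ P₁ *ᵥ v := by rw [← hP₁, hT, dotProduct_comm, hP₁]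
  simp only [Phi, fromBlocks_mulVec, fromCols_mulVec_sumElim, fromRows_mulVec,
    sumElim_dotProduct_sumElim, add_mulVec, sub_mulVec, neg_mulVec, smul_mulVec,
    dotProduct_add, dotProduct_sub, dotProduct_neg, dotProduct_smul, transpose_add,
    transpose_sub, transpose_mul, transpose_transpose, transpose_smul, hP₁, hR,
    smul_eq_mul, Sum.elim_comp_inl, Sum.elim_comp_inr]
  simp only [← mulVec_mulVec, hT, mulVec_sub, dotProduct_sub, add_dotProduct, sub_dotProduct,
    dotProduct_comm (P₂ *ᵥ u), dotProduct_comm (P₃ *ᵥ v)]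
  rw [hP₁uv]
  ring

section DelaySystem

variable {N : ℕ} {a δ τ : ℝ} {K : Matrix (Fin 1) (Fin (N + 1)) ℝ}
  {P₁ P₂ P₃ S R : Matrix (Fin (N + 1)) (Fin (N + 1)) ℝ}

theorem lyapunovKrasovskiiDeriv_nonpos (hδ : 0 ≤ δ) (hτ : 0 ≤ τ) (hP₁ : P₁ᵀ = P₁)
    (hR : R.PosSemidef) (hΦ : ∀ η, η ⬝ᵥ Phi N a δ τ K P₁ P₂ P₃ S R *ᵥ η ≤ 0)
    {x y : ℝ → Fin (N + 1) → ℝ} {t : ℝ} (hx : Continuous x) (hy : Continuous y)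
    (hxy : ∀ s ∈ Set.Ioo (t - τ) t, HasDerivAt x (y s) s)
    (hode : y t = Amat N a *ᵥ x t + (Bmat N * K) *ᵥ x (t - τ)) :
    lyapunovKrasovskiiDeriv δ τ P₁ S R x y t ≤ 0 := by
  have hwindow : t - τ ≤ t := by linarith
  have hftc : ∫ s in t - τ..t, y s = x t - x (t - τ) :=
    intervalIntegral.integral_eq_sub_of_hasDerivAt_of_le hwindow hx.continuousOn hxy
      (hy.intervalIntegrable _ _)
  have hjensen : (x t - x (t - τ)) ⬝ᵥ R *ᵥ (x t - x (t - τ))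
      ≤ τ * ∫ s in t - τ..t, y s ⬝ᵥ R *ᵥ y s := by
    simpa [hftc] using quadForm_intervalIntegral_le hR.quadForm_nonneg hy hwindow
  have hweight : exp (2 * δ * (t - τ)) * ∫ s in t - τ..t, y s ⬝ᵥ R *ᵥ y s
      ≤ ∫ s in t - τ..t, exp (2 * δ * s) * (y s ⬝ᵥ R *ᵥ y s) := by
    have hRy : Continuous fun s => y s ⬝ᵥ R *ᵥ y s := (continuous_quadForm R).comp hy
    rw [← intervalIntegral.integral_const_mul]
    refine intervalIntegral.integral_mono_on hwindow
      (Continuous.intervalIntegrable (by fun_prop) _ _)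
      (Continuous.intervalIntegrable (by fun_prop) _ _) fun s hs => ?_
    gcongr
    · exact hR.quadForm_nonneg _
    · exact hs.1
  have hdelay : exp (2 * δ * (t - τ)) * ((x t - x (t - τ)) ⬝ᵥ R *ᵥ (x t - x (t - τ)))
      ≤ τ * ∫ s in t - τ..t, exp (2 * δ * s) * (y s ⬝ᵥ R *ᵥ y s) := by
    calc _ ≤ exp (2 * δ * (t - τ)) * (τ * ∫ s in t - τ..t, y s ⬝ᵥ R *ᵥ y s) := by gcongr
      _ ≤ _ := by rw [mul_left_comm]; gcongr
  have hΦη := hΦ (Sum.elim (x t) (Sum.elim (y t) (x (t - τ))))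
  rw [quadForm_Phi a δ τ K hP₁ hR.transpose_eq, ← hode, sub_self, dotProduct_zero, mul_zero,
    add_zero] at hΦη
  have hexp : exp (2 * δ * (t - τ)) = exp (2 * δ * t) * exp (-2 * δ * τ) := by
    rw [← exp_add]; ring_nf
  have hP₁yx : y t ⬝ᵥ P₁ *ᵥ x t = x t ⬝ᵥ P₁ *ᵥ y t := by
    rw [dotProduct_mulVec, ← mulVec_transpose, hP₁, dotProduct_comm]
  calc lyapunovKrasovskiiDeriv δ τ P₁ S R x y t
      ≤ exp (2 * δ * t) * (2 * δ * (x t ⬝ᵥ P₁ *ᵥ x t) + 2 * (x t ⬝ᵥ P₁ *ᵥ y t)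
          + x t ⬝ᵥ S *ᵥ x t - exp (-2 * δ * τ) * (x (t - τ) ⬝ᵥ S *ᵥ x (t - τ))
          + τ ^ 2 * (y t ⬝ᵥ R *ᵥ y t)
          - exp (-2 * δ * τ) * ((x t - x (t - τ)) ⬝ᵥ R *ᵥ (x t - x (t - τ)))) := by
        rw [hexp] at hdelay
        simp only [lyapunovKrasovskiiDeriv, hexp, hP₁yx]
        linarith
    _ ≤ 0 := mul_nonpos_of_nonneg_of_nonpos (exp_pos _).le hΦη

theorem lyapunovKrasovskii_antitoneOn (hδ : 0 ≤ δ) (hτ : 0 < τ) (hP₁ : P₁ᵀ = P₁)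
    (hR : R.PosSemidef) (hΦ : ∀ η, η ⬝ᵥ Phi N a δ τ K P₁ P₂ P₃ S R *ᵥ η ≤ 0)
    {x y : ℝ → Fin (N + 1) → ℝ} (hx : Continuous x) (hy : Continuous y)
    (hxy : ∀ s, 0 < s → HasDerivAt x (y s) s)
    (hode : ∀ t, τ < t → y t = Amat N a *ᵥ x t + (Bmat N * K) *ᵥ x (t - τ)) :
    AntitoneOn (lyapunovKrasovskii δ τ P₁ S R x y) (Set.Ici τ) := by
  have hderiv (t : ℝ) (ht : τ ≤ t) :=
    hasDerivAt_lyapunovKrasovskii (δ := δ) (τ := τ) (P := P₁) (S := S) (R := R) hx hy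
      (hxy t (hτ.trans_le ht))
  refine antitoneOn_of_hasDerivWithinAt_nonpos (f' := lyapunovKrasovskiiDeriv δ τ P₁ S R x y)
    (convex_Ici τ) (fun t ht => (hderiv t ht).continuousAt.continuousWithinAt)
    (fun t ht => ?_) fun t ht => ?_
  all_goals rw [interior_Ici, Set.mem_Ioi] at ht
  · exact (hderiv t ht.le).hasDerivWithinAt
  · exact lyapunovKrasovskiiDeriv_nonpos hδ hτ.le hP₁ hR hΦ hx hy
      (fun s hs => hxy s (by linarith [hs.1])) (hode t ht)

theorem quadForm_le_exp_mul_of_isSolution (hδ : 0 ≤ δ) (hτ : 0 < τ) (hP₁ : P₁ᵀ = P₁)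
    (hS : S.PosSemidef) (hR : R.PosSemidef)
    (hΦ : ∀ η, η ⬝ᵥ Phi N a δ τ K P₁ P₂ P₃ S R *ᵥ η ≤ 0) {x x' : ℝ → Fin (N + 1) → ℝ}
    (hdx : ∀ t, 0 ≤ t → HasDerivAt x (x' t) t) (hcx : ContinuousOn x' (Set.Ici 0))
    (hode : ∀ t, τ ≤ t → x' t = Amat N a *ᵥ x t + (Bmat N * K) *ᵥ x (t - τ))
    {α β γ : ℝ} (hα : x τ ⬝ᵥ P₁ *ᵥ x τ ≤ α) (hβ : ∀ s ∈ Set.Icc 0 τ, x s ⬝ᵥ S *ᵥ x s ≤ β)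
    (hγ : ∀ s ∈ Set.Icc 0 τ, x' s ⬝ᵥ R *ᵥ x' s ≤ γ) {t : ℝ} (ht : τ ≤ t) :
    x t ⬝ᵥ P₁ *ᵥ x t ≤ exp (2 * δ * (τ - t)) * (α + τ * β + τ ^ 3 * γ) := by
  obtain ⟨xe, ye, hxe, hye, heq, hderiv⟩ := exists_extension_of_hasDerivAt_Ici hdx hcx
  have hode' (t : ℝ) (ht : τ < t) : ye t = Amat N a *ᵥ xe t + (Bmat N * K) *ᵥ xe (t - τ) := by
    rw [(heq t (by linarith)).1, (heq t (by linarith)).2, (heq (t - τ) (by linarith)).1]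
    exact hode t ht.le
  have hW : exp (2 * δ * t) * (xe t ⬝ᵥ P₁ *ᵥ xe t) ≤ exp (2 * δ * τ) * (α + τ * β + τ ^ 3 * γ) :=
    calc _ ≤ lyapunovKrasovskii δ τ P₁ S R xe ye t :=
          exp_mul_quadForm_le_lyapunovKrasovskii hτ.le hS.quadForm_nonneg hR.quadForm_nonneg t
      _ ≤ lyapunovKrasovskii δ τ P₁ S R xe ye τ :=
          lyapunovKrasovskii_antitoneOn hδ hτ hP₁ hR hΦ hxe hye hderiv hode' Set.self_mem_Ici ht ht
      _ ≤ _ := lyapunovKrasovskii_self_le hδ hτ.le hS.quadForm_nonneg hR.quadForm_nonneg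
          (by rwa [(heq τ hτ.le).1]) (fun s hs => by rw [(heq s hs.1).1]; exact hβ s hs)
          (fun s hs => by rw [(heq s hs.1).2]; exact hγ s hs)
  rw [(heq t (hτ.le.trans ht)).1, show 2 * δ * τ = 2 * δ * t + 2 * δ * (τ - t) by ring,
    exp_add] at hW
  exact le_of_mul_le_mul_left (hW.trans_eq (by ring)) (exp_pos _)

end DelaySystem

theorem stmt1 (N : ℕ) (a δ τ : ℝ) (hδ : 0 < δ) (hτ : 0 < τ)
    (K : Matrix (Fin 1) (Fin (N + 1)) ℝ)
    (P₁ P₂ P₃ S R : Matrix (Fin (N + 1)) (Fin (N + 1)) ℝ)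
    (hP₁ : P₁.PosDef) (hS : S.PosDef) (hR : R.PosDef)
    (hΦ : (-(Phi N a δ τ K P₁ P₂ P₃ S R)).PosDef) :
    ∃ M > 0, ∀ x x' : ℝ → (Fin (N + 1) → ℝ),
      (∀ t, 0 ≤ t → HasDerivAt x (x' t) t) →
      ContinuousOn x' (Set.Ici 0) →
      (∀ t, τ ≤ t → x' t = (Amat N a).mulVec (x t) + (Bmat N * K).mulVec (x (t - τ))) →
      ∀ t, 0 ≤ t →
        ‖x t‖ ≤ M * Real.exp (-δ * t) *
          sSup ((fun s => ‖x s‖ + ‖x' s‖) '' Set.Icc (0 : ℝ) τ) := by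
  obtain ⟨c₁, hc₁, hP₁low⟩ := hP₁.exists_pos_mul_sq_norm_le
  obtain ⟨C₁, hC₁, hP₁up⟩ := hP₁.posSemidef.exists_quadForm_le_mul_sq_norm
  obtain ⟨CS, hCS, hSup⟩ := hS.posSemidef.exists_quadForm_le_mul_sq_norm
  obtain ⟨CR, hCR, hRup⟩ := hR.posSemidef.exists_quadForm_le_mul_sq_norm
  have hΦ' (η) : η ⬝ᵥ Phi N a δ τ K P₁ P₂ P₃ S R *ᵥ η ≤ 0 := by
    simpa [neg_mulVec] using hΦ.posSemidef.quadForm_nonneg η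
  set C := (C₁ + τ * CS + τ ^ 3 * CR) / c₁ + 1
  have hC : 1 ≤ C := le_add_of_nonneg_left (by positivity)
  refine ⟨√C * exp (δ * τ), by positivity, fun x x' hdx hcx hode t ht => ?_⟩
  set D := sSup ((fun s => ‖x s‖ + ‖x' s‖) '' Set.Icc (0 : ℝ) τ)
  have hD (s : ℝ) (hs : s ∈ Set.Icc 0 τ) : ‖x s‖ ≤ D ∧ ‖x' s‖ ≤ D :=
    norm_le_sSup_image_Icc (fun s hs => (hdx s hs.1).continuousAt.continuousWithinAt)
      (hcx.mono Set.Icc_subset_Ici_self) hs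
  have hbound {P : Matrix (Fin (N + 1)) (Fin (N + 1)) ℝ} {c : ℝ} (hc : 0 ≤ c)
      (hP : ∀ v, v ⬝ᵥ P *ᵥ v ≤ c * ‖v‖ ^ 2) {v : Fin (N + 1) → ℝ} (hv : ‖v‖ ≤ D) :
      v ⬝ᵥ P *ᵥ v ≤ c * D ^ 2 :=
    (hP v).trans (by gcongr)
  have hsq : ‖x t‖ ^ 2 ≤ C * exp (2 * δ * (τ - t)) * D ^ 2 := by
    rcases le_total t τ with htτ | hτt
    · calc ‖x t‖ ^ 2 ≤ D ^ 2 := pow_le_pow_left₀ (norm_nonneg _) (hD t ⟨ht, htτ⟩).1 2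
        _ ≤ _ := le_mul_of_one_le_left (sq_nonneg _)
          (one_le_mul_of_one_le_of_one_le hC (one_le_exp (by nlinarith)))
    · have hq := quadForm_le_exp_mul_of_isSolution hδ.le hτ hP₁.posSemidef.transpose_eq
        hS.posSemidef hR.posSemidef hΦ' hdx hcx hode (hbound hC₁ hP₁up (hD τ ⟨hτ.le, le_rfl⟩).1)
        (fun s hs => hbound hCS hSup (hD s hs).1) (fun s hs => hbound hCR hRup (hD s hs).2) hτt
      have hc₁q : c₁ * ‖x t‖ ^ 2 ≤ c₁ * ((C - 1) * exp (2 * δ * (τ - t)) * D ^ 2) :=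
        (hP₁low _).trans (hq.trans_eq (by simp only [C]; field_simp; ring))
      calc ‖x t‖ ^ 2 ≤ (C - 1) * exp (2 * δ * (τ - t)) * D ^ 2 := le_of_mul_le_mul_left hc₁q hc₁
        _ ≤ _ := by gcongr; linarith
  exact le_sqrt_mul_exp_mul_of_sq_le (by linarith) ((norm_nonneg _).trans (hD 0 ⟨le_rfl, hτ.le⟩).1)
    hsq
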